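/- Let α ∈ (0,2), let w̃^k be the output of the parallel splitting ALM step with input ξ^k, and let ξ^{k+1} = ξ^k − αℳ(ξ^k − ξ̃^k). Then for every ξ* ∈ Ξ*: ‖ξ^{k+1} − ξ*‖²_ℋ ≤ ‖ξ^k − ξ*‖²_ℋ − α(2 − α)‖ξ^k − ξ̃^k‖²_𝒟. -/
import Mathlib


open Matrix
open scoped Kronecker

noncomputable section

/-- `Q₀ = [β I_p, e_p; −e_pᵀ, 1/β]`. -/
def Q0 (p : ℕ) (β : ℝ) : Matrix (Fin p ⊕ Unit) (Fin p ⊕ Unit) ℝ :=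
  Matrix.fromBlocks (β • (1 : Matrix (Fin p) (Fin p) ℝ))
    (Matrix.of fun _ _ => (1 : ℝ))
    (Matrix.of fun _ _ => (-1 : ℝ))
    (Matrix.of fun _ _ => 1 / β)

/-- `D₀ = diag(β, …, β, 1/β)`. -/
def D0 (p : ℕ) (β : ℝ) : Matrix (Fin p ⊕ Unit) (Fin p ⊕ Unit) ℝ :=
  Matrix.fromBlocks (β • (1 : Matrix (Fin p) (Fin p) ℝ)) 0 0
    (Matrix.of fun _ _ => 1 / β)

/-- `M₀ = I_{p+1} − (1/(p+1))·[e_p e_pᵀ, −(1/β)e_p; β e_pᵀ, p]`. -/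
def M0 (p : ℕ) (β : ℝ) : Matrix (Fin p ⊕ Unit) (Fin p ⊕ Unit) ℝ :=
  1 - (1 / (p + 1 : ℝ)) •
    Matrix.fromBlocks (Matrix.of fun _ _ => (1 : ℝ))
      (Matrix.of fun _ _ => -(1 / β))
      (Matrix.of fun _ _ => (β : ℝ))
      (Matrix.of fun _ _ => (p : ℝ))

/-- `H₀ = [β(I_p + e_p e_pᵀ), 0; 0, (p+1)/β]`. -/
def H0 (p : ℕ) (β : ℝ) : Matrix (Fin p ⊕ Unit) (Fin p ⊕ Unit) ℝ :=
  Matrix.fromBlocks (β • ((1 : Matrix (Fin p) (Fin p) ℝ) + Matrix.of fun _ _ => (1 : ℝ))) 0 0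
    (Matrix.of fun _ _ => (p + 1 : ℝ) / β)

/-- `𝒬 = Q₀ ⊗ I_m`. -/
def calQ (p m : ℕ) (β : ℝ) : Matrix ((Fin p ⊕ Unit) × Fin m) ((Fin p ⊕ Unit) × Fin m) ℝ :=
  Q0 p β ⊗ₖ (1 : Matrix (Fin m) (Fin m) ℝ)

/-- `𝒟 = D₀ ⊗ I_m`. -/
def calD (p m : ℕ) (β : ℝ) : Matrix ((Fin p ⊕ Unit) × Fin m) ((Fin p ⊕ Unit) × Fin m) ℝ :=
  D0 p β ⊗ₖ (1 : Matrix (Fin m) (Fin m) ℝ)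

/-- `ℳ = M₀ ⊗ I_m`. -/
def calM (p m : ℕ) (β : ℝ) : Matrix ((Fin p ⊕ Unit) × Fin m) ((Fin p ⊕ Unit) × Fin m) ℝ :=
  M0 p β ⊗ₖ (1 : Matrix (Fin m) (Fin m) ℝ)

/-- `ℋ = H₀ ⊗ I_m`. -/
def calH (p m : ℕ) (β : ℝ) : Matrix ((Fin p ⊕ Unit) × Fin m) ((Fin p ⊕ Unit) × Fin m) ℝ :=
  H0 p β ⊗ₖ (1 : Matrix (Fin m) (Fin m) ℝ)

/-- `‖v‖²_G = vᵀ G v`. -/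
def nsq {p m : ℕ} (G : Matrix ((Fin p ⊕ Unit) × Fin m) ((Fin p ⊕ Unit) × Fin m) ℝ)
    (v : (Fin p ⊕ Unit) × Fin m → ℝ) : ℝ :=
  v ⬝ᵥ G.mulVec v

/-- `θ(x) = Σ_i θ_i(x_i)`. -/
def thetaSum {p : ℕ} {n : Fin p → ℕ} (θ : (i : Fin p) → (Fin (n i) → ℝ) → ℝ)
    (x : (i : Fin p) → Fin (n i) → ℝ) : ℝ :=
  ∑ i, θ i (x i)

/-- The Euclidean inner product on `ℝ^{n_1}×⋯×ℝ^{n_p}×ℝ^m`. -/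
def dotW {p m : ℕ} {n : Fin p → ℕ}
    (w w' : ((i : Fin p) → Fin (n i) → ℝ) × (Fin m → ℝ)) : ℝ :=
  (∑ i, w.1 i ⬝ᵥ w'.1 i) + w.2 ⬝ᵥ w'.2

/-- `F(w) = (−A_1ᵀλ, …, −A_pᵀλ, Σ_i A_i x_i − b)`. -/
def Fop {p m : ℕ} {n : Fin p → ℕ} (A : (i : Fin p) → Matrix (Fin m) (Fin (n i)) ℝ)
    (b : Fin m → ℝ) (w : ((i : Fin p) → Fin (n i) → ℝ) × (Fin m → ℝ)) :
    ((i : Fin p) → Fin (n i) → ℝ) × (Fin m → ℝ) :=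
  (fun i => -((A i)ᵀ.mulVec w.2), (∑ i, (A i).mulVec (w.1 i)) - b)

/-- `Pw = (A_1 x_1, …, A_p x_p, λ) ∈ ℝ^{(p+1)m}`. -/
def Pmap {p m : ℕ} {n : Fin p → ℕ} (A : (i : Fin p) → Matrix (Fin m) (Fin (n i)) ℝ)
    (w : ((i : Fin p) → Fin (n i) → ℝ) × (Fin m → ℝ)) :
    (Fin p ⊕ Unit) × Fin m → ℝ :=
  fun q => Sum.elim (fun i => (A i).mulVec (w.1 i) q.2) (fun _ => w.2 q.2) q.1

/-- `Ω = 𝒳_1 × ⋯ × 𝒳_p × ℝ^m`. -/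
def OmegaSet {p : ℕ} (m : ℕ) {n : Fin p → ℕ} (X : (i : Fin p) → Set (Fin (n i) → ℝ)) :
    Set (((i : Fin p) → Fin (n i) → ℝ) × (Fin m → ℝ)) :=
  {w | ∀ i, w.1 i ∈ X i}

/-- The solution set `Ω*` of the variational inequality VI(Ω,F,θ). -/
def VIsol {p m : ℕ} {n : Fin p → ℕ} (θ : (i : Fin p) → (Fin (n i) → ℝ) → ℝ)
    (X : (i : Fin p) → Set (Fin (n i) → ℝ))
    (A : (i : Fin p) → Matrix (Fin m) (Fin (n i)) ℝ) (b : Fin m → ℝ) :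
    Set (((i : Fin p) → Fin (n i) → ℝ) × (Fin m → ℝ)) :=
  {ws | ws ∈ OmegaSet m X ∧ ∀ w ∈ OmegaSet m X,
    thetaSum θ w.1 - thetaSum θ ws.1 + dotW (w - ws) (Fop A b ws) ≥ 0}

/-- The `λ`-component of `ξ = (u_1, …, u_p, λ)`. -/
def lamOf {p m : ℕ} (ξ : (Fin p ⊕ Unit) × Fin m → ℝ) : Fin m → ℝ :=
  fun j => ξ (Sum.inr (), j)

/-- The `u_i`-component of `ξ = (u_1, …, u_p, λ)`. -/
def uOf {p m : ℕ} (ξ : (Fin p ⊕ Unit) × Fin m → ℝ) (i : Fin p) : Fin m → ℝ :=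
  fun j => ξ (Sum.inl i, j)

/-- The parallel splitting ALM step: with input `ξ = (u_1, …, u_p, λ)` it produces
`w̃ = (x̃_1, …, x̃_p, λ̃)` where each `x̃_i ∈ 𝒳_i` minimizes
`x_i ↦ θ_i(x_i) − λᵀ A_i x_i + (β/2)‖A_i x_i − u_i‖²` over `𝒳_i`, and
`λ̃ = λ − β(Σ_i u_i − b)`. -/
def ALMStep {p m : ℕ} {n : Fin p → ℕ} (β : ℝ) (θ : (i : Fin p) → (Fin (n i) → ℝ) → ℝ)
    (X : (i : Fin p) → Set (Fin (n i) → ℝ))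
    (A : (i : Fin p) → Matrix (Fin m) (Fin (n i)) ℝ) (b : Fin m → ℝ)
    (ξ : (Fin p ⊕ Unit) × Fin m → ℝ)
    (wt : ((i : Fin p) → Fin (n i) → ℝ) × (Fin m → ℝ)) : Prop :=
  (∀ i, wt.1 i ∈ X i ∧ ∀ y ∈ X i,
      θ i (wt.1 i) - lamOf ξ ⬝ᵥ (A i).mulVec (wt.1 i) +
          β / 2 * (((A i).mulVec (wt.1 i) - uOf ξ i) ⬝ᵥ ((A i).mulVec (wt.1 i) - uOf ξ i)) ≤
        θ i y - lamOf ξ ⬝ᵥ (A i).mulVec y +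
          β / 2 * (((A i).mulVec y - uOf ξ i) ⬝ᵥ ((A i).mulVec y - uOf ξ i))) ∧
  wt.2 = lamOf ξ - β • ((∑ i, uOf ξ i) - b)

lemma H0_mul_M0 (p : ℕ) (β : ℝ) (hβ : β ≠ 0) : H0 p β * M0 p β = Q0 p β := by
  have hp1 : ((p : ℝ) + 1) ≠ 0 := by positivity
  have hp2 : (1 : ℝ) + (p : ℝ) ≠ 0 := by positivity
  ext x y
  rcases x with i | _ <;> rcases y with j | _ <;>
    simp only [Matrix.mul_apply, H0, M0, Q0, Fintype.sum_sum_type, Matrix.sub_apply,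
      Matrix.smul_apply, Matrix.one_apply, Matrix.add_apply, Matrix.of_apply,
      Matrix.zero_apply, Matrix.fromBlocks_apply₁₁, Matrix.fromBlocks_apply₁₂,
      Matrix.fromBlocks_apply₂₁, Matrix.fromBlocks_apply₂₂, Finset.univ_unique,
      Finset.sum_singleton, Sum.inl.injEq, Sum.inr.injEq, reduceCtorEq, if_false, if_true,
      smul_eq_mul, mul_sub, mul_add, sub_mul, add_mul, ite_mul, zero_mul, mul_zero,
      mul_ite, mul_one, one_mul, sub_zero, zero_sub, add_zero, zero_add, neg_zero] <;>
    simp only [Finset.sum_sub_distrib, Finset.sum_add_distrib, Finset.sum_ite_eq,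
      Finset.sum_ite_eq', Finset.mem_univ, if_true, Finset.sum_const, Finset.card_univ,
      Fintype.card_fin, nsmul_eq_mul, Finset.sum_neg_distrib] <;>
    first
      | (split_ifs <;> (first | ring1 | (field_simp; ring1) | field_simp))
      | ring1 | (field_simp; ring1) | field_simp

lemma M0T_mul_Q0 (p : ℕ) (β : ℝ) (hβ : β ≠ 0) : (M0 p β)ᵀ * Q0 p β = D0 p β := by
  have hp1 : ((p : ℝ) + 1) ≠ 0 := by positivity
  have hp2 : (1 : ℝ) + (p : ℝ) ≠ 0 := by positivity
  ext x y
  rcases x with i | _ <;> rcases y with j | _ <;>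
    simp only [Matrix.mul_apply, M0, Q0, D0, Fintype.sum_sum_type, Matrix.sub_apply,
      Matrix.smul_apply, Matrix.one_apply, Matrix.add_apply, Matrix.of_apply,
      Matrix.zero_apply, Matrix.transpose_apply, Matrix.fromBlocks_apply₁₁,
      Matrix.fromBlocks_apply₁₂, Matrix.fromBlocks_apply₂₁,
      Matrix.fromBlocks_apply₂₂, Finset.univ_unique, Finset.sum_singleton,
      Sum.inl.injEq, Sum.inr.injEq, reduceCtorEq, if_false, if_true,
      smul_eq_mul, mul_sub, mul_add, sub_mul, add_mul, ite_mul, zero_mul, mul_zero,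
      mul_ite, mul_one, one_mul, sub_zero, zero_sub, add_zero, zero_add, neg_zero,
      neg_mul, mul_neg, neg_neg, neg_sub, neg_add_rev] <;>
    simp only [Finset.sum_sub_distrib, Finset.sum_add_distrib, Finset.sum_neg_distrib,
      Finset.sum_ite_eq, Finset.sum_ite_eq', Finset.mem_univ, if_true, Finset.sum_const,
      Finset.card_univ, Fintype.card_fin, nsmul_eq_mul] <;>
    first
      | (split_ifs <;> (first | ring1 | (field_simp; ring1) | field_simp))
      | ring1 | (field_simp; ring1) | field_simp

lemma Q0_add_Q0T (p : ℕ) (β : ℝ) : Q0 p β + (Q0 p β)ᵀ = D0 p β + D0 p β := by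
  ext x y
  rcases x with i | _ <;> rcases y with j | _ <;>
    simp only [Matrix.add_apply, Matrix.transpose_apply, Q0, D0, Matrix.smul_apply,
      Matrix.fromBlocks_apply₁₁, Matrix.fromBlocks_apply₁₂, Matrix.fromBlocks_apply₂₁,
      Matrix.fromBlocks_apply₂₂, Matrix.of_apply, Matrix.zero_apply, Matrix.one_apply,
      smul_eq_mul, mul_ite, mul_zero, mul_one] <;>
    first
      | (split_ifs with h <;> simp_all <;> ring1)
      | ring1 | norm_num

lemma H0_symm (p : ℕ) (β : ℝ) : (H0 p β)ᵀ = H0 p β := by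
  ext x y
  rcases x with i | _ <;> rcases y with j | _ <;>
    simp only [Matrix.transpose_apply, H0, Matrix.fromBlocks_apply₁₁,
      Matrix.fromBlocks_apply₁₂, Matrix.fromBlocks_apply₂₁, Matrix.fromBlocks_apply₂₂,
      Matrix.of_apply, Matrix.zero_apply, Matrix.smul_apply, Matrix.add_apply,
      Matrix.one_apply, smul_eq_mul] <;>
    first
      | (split_ifs with h <;> simp_all) | rfl

lemma dot_mulVec_comm {κ : Type*} [Fintype κ] (G : Matrix κ κ ℝ) (x y : κ → ℝ) :
    x ⬝ᵥ G.mulVec y = y ⬝ᵥ Gᵀ.mulVec x := by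
  rw [Matrix.dotProduct_mulVec, Matrix.mulVec_transpose, dotProduct_comm]

lemma kron_bilin {κ : Type*} [Fintype κ] {m : ℕ} (G : Matrix κ κ ℝ)
    (v w : κ × Fin m → ℝ) :
    v ⬝ᵥ (G ⊗ₖ (1 : Matrix (Fin m) (Fin m) ℝ)).mulVec w
      = ∑ q, ∑ q', G q q' * ((fun j => v (q, j)) ⬝ᵥ (fun j => w (q', j))) := by
  simp only [dotProduct, Matrix.mulVec, Matrix.kroneckerMap_apply,
    Fintype.sum_prod_type, Matrix.one_apply, mul_ite, mul_one, mul_zero, ite_mul, zero_mul,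
    Finset.sum_ite_eq, Finset.mem_univ, if_true, Finset.mul_sum]
  refine Finset.sum_congr rfl fun q _ => ?_
  rw [Finset.sum_comm]
  exact Finset.sum_congr rfl fun q' _ => Finset.sum_congr rfl fun j _ => by ring
lemma Q_bilin (p m : ℕ) (β : ℝ) (v w : (Fin p ⊕ Unit) × Fin m → ℝ) :
    v ⬝ᵥ (calQ p m β).mulVec w =
      ((∑ i, (β * ((fun j => v (Sum.inl i, j)) ⬝ᵥ (fun j => w (Sum.inl i, j)))
          + (fun j => v (Sum.inl i, j)) ⬝ᵥ (fun j => w (Sum.inr (), j))))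
        - ∑ i, ((fun j => v (Sum.inr (), j)) ⬝ᵥ (fun j => w (Sum.inl i, j))))
        + (1/β) * ((fun j => v (Sum.inr (), j)) ⬝ᵥ (fun j => w (Sum.inr (), j))) := by
  rw [calQ, kron_bilin]
  simp only [Fintype.sum_sum_type, Finset.univ_unique, Finset.sum_singleton, Q0,
    Matrix.fromBlocks_apply₁₁, Matrix.fromBlocks_apply₁₂, Matrix.fromBlocks_apply₂₁,
    Matrix.fromBlocks_apply₂₂, Matrix.of_apply, Matrix.smul_apply, Matrix.one_apply,
    smul_eq_mul, mul_ite, mul_one, mul_zero, ite_mul, zero_mul, Finset.sum_ite_eq,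
    Finset.mem_univ, if_true, neg_mul, one_mul, Finset.sum_add_distrib,
    Finset.sum_neg_distrib, PUnit.default_eq_unit]
  ring

lemma dot_transpose_mulVec {m n : ℕ} (Ai : Matrix (Fin m) (Fin n) ℝ) (x : Fin n → ℝ)
    (c : Fin m → ℝ) : x ⬝ᵥ Aiᵀ.mulVec c = Ai.mulVec x ⬝ᵥ c := by
  rw [Matrix.mulVec_transpose, dotProduct_comm x, ← Matrix.dotProduct_mulVec, dotProduct_comm]

lemma opt_first_order {ni m : ℕ} (θi : (Fin ni → ℝ) → ℝ) (hθi : ConvexOn ℝ Set.univ θi)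
    (Xi : Set (Fin ni → ℝ)) (hX : Convex ℝ Xi)
    (Ai : Matrix (Fin m) (Fin ni) ℝ) (lam u : Fin m → ℝ) {β : ℝ} (hβ : 0 < β)
    (xt : Fin ni → ℝ) (hxt : xt ∈ Xi)
    (hmin : ∀ y ∈ Xi,
      θi xt - lam ⬝ᵥ Ai.mulVec xt +
          β / 2 * ((Ai.mulVec xt - u) ⬝ᵥ (Ai.mulVec xt - u)) ≤
        θi y - lam ⬝ᵥ Ai.mulVec y +
          β / 2 * ((Ai.mulVec y - u) ⬝ᵥ (Ai.mulVec y - u)))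
    (y : Fin ni → ℝ) (hy : y ∈ Xi) :
    0 ≤ θi y - θi xt +
        (Ai.mulVec y - Ai.mulVec xt) ⬝ᵥ (β • (Ai.mulVec xt - u) - lam) := by
  set v := Ai.mulVec xt with hv
  set h := Ai.mulVec y - v with hh
  have e3 : h ⬝ᵥ (β • (v - u) - lam) = β * (h ⬝ᵥ (v - u)) - lam ⬝ᵥ h := by
    rw [dotProduct_sub, dotProduct_smul, smul_eq_mul, dotProduct_comm h lam]
  rw [e3]
  have hq : (0:ℝ) ≤ h ⬝ᵥ h := Finset.sum_nonneg fun j _ => mul_self_nonneg _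
  set g := θi y - θi xt + (β * (h ⬝ᵥ (v - u)) - lam ⬝ᵥ h) with hg
  set C := β / 2 * (h ⬝ᵥ h) with hC
  have hC0 : 0 ≤ C := mul_nonneg (by positivity) hq
  have key : ∀ τ : ℝ, 0 < τ → τ ≤ 1 → 0 ≤ τ * g + τ ^ 2 * C := by
    intro τ hτ hτ1
    have hz : (1 - τ) • xt + τ • y ∈ Xi := hX hxt hy (by linarith) (le_of_lt hτ) (by ring)
    have hmz := hmin _ hz
    have hθz : θi ((1 - τ) • xt + τ • y) ≤ (1 - τ) * θi xt + τ * θi y :=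
      hθi.2 (Set.mem_univ xt) (Set.mem_univ y) (by linarith) (le_of_lt hτ) (by ring)
    have hAz : Ai.mulVec ((1 - τ) • xt + τ • y) = v + τ • h := by
      rw [Matrix.mulVec_add, Matrix.mulVec_smul, Matrix.mulVec_smul, hh, ← hv]
      module
    rw [hAz] at hmz
    have e1 : (v + τ • h - u) ⬝ᵥ (v + τ • h - u) =
        (v - u) ⬝ᵥ (v - u) + 2 * τ * (h ⬝ᵥ (v - u)) + τ ^ 2 * (h ⬝ᵥ h) := by
      simp only [dotProduct, Pi.add_apply, Pi.sub_apply, Pi.smul_apply, smul_eq_mul,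
        Finset.mul_sum, ← Finset.sum_add_distrib]
      exact Finset.sum_congr rfl fun j _ => by ring
    have e2 : lam ⬝ᵥ (v + τ • h) = lam ⬝ᵥ v + τ * (lam ⬝ᵥ h) := by
      simp only [dotProduct, Pi.add_apply, Pi.smul_apply, smul_eq_mul,
        Finset.mul_sum, ← Finset.sum_add_distrib]
      exact Finset.sum_congr rfl fun j _ => by ring
    rw [e1, e2] at hmz
    rw [hg, hC]
    nlinarith [hmz, hθz]
  by_contra hcon
  push_neg at hcon
  have hgneg : g < 0 := by linarith
  set τ := min 1 (-g / (2 * C + 1)) with hτdef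
  have hτpos : 0 < τ := lt_min one_pos (div_pos (by linarith) (by linarith))
  have hτ1 : τ ≤ 1 := min_le_left _ _
  have hτle : τ ≤ -g / (2 * C + 1) := min_le_right _ _
  have h2C : (0:ℝ) < 2 * C + 1 := by linarith
  have hkey := key τ hτpos hτ1
  have hmul : τ * (2 * C + 1) ≤ -g := by
    rw [← le_div_iff₀ h2C] at *
    exact hτle
  nlinarith [mul_pos hτpos hτpos, sq_nonneg τ, mul_le_mul_of_nonneg_left hmul (le_of_lt hτpos)]

lemma nsq_sub_expand {p m : ℕ} (G : Matrix ((Fin p ⊕ Unit) × Fin m) ((Fin p ⊕ Unit) × Fin m) ℝ)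
    (x c : (Fin p ⊕ Unit) × Fin m → ℝ) :
    nsq G (x - c) = nsq G x - x ⬝ᵥ G.mulVec c - c ⬝ᵥ G.mulVec x + nsq G c := by
  simp only [nsq, Matrix.mulVec_sub, dotProduct_sub, sub_dotProduct]
  ring

lemma bridge_j {p : ℕ} (β lk ls lt bj : ℝ) (hβ : β ≠ 0) (t s u : Fin p → ℝ)
    (hlt : lt = lk - β * ((∑ i, u i) - bj)) :
    (∑ i, β * ((t i - s i) * (u i - t i))) + (∑ i, (t i - s i) * (lk - lt))
      - (∑ i, (lt - ls) * (u i - t i))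
      + 1 / β * ((lt - ls) * (lk - lt))
    = (∑ i, (s i - t i) * ((β * (t i - u i) - lk) + ls))
      + (lt - ls) * ((∑ i, s i) - bj) := by
  have e0 : ∑ i, β * ((t i - s i) * (u i - t i)) = β * ∑ i, (t i - s i) * (u i - t i) := by
    rw [← Finset.mul_sum]
  have e1 : ∑ i, (t i - s i) * (lk - lt) = ((∑ i, t i) - ∑ i, s i) * (lk - lt) := by
    rw [← Finset.sum_mul, Finset.sum_sub_distrib]
  have e2 : ∑ i, (lt - ls) * (u i - t i) = (lt - ls) * ((∑ i, u i) - ∑ i, t i) := by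
    rw [← Finset.mul_sum, Finset.sum_sub_distrib]
  have e3 : ∑ i, (s i - t i) * ((β * (t i - u i) - lk) + ls)
      = β * (∑ i, (t i - s i) * (u i - t i)) + ((∑ i, s i) - ∑ i, t i) * (ls - lk) := by
    rw [show (∑ i, (s i - t i) * ((β * (t i - u i) - lk) + ls))
        = ∑ i, (β * ((t i - s i) * (u i - t i)) + (s i - t i) * (ls - lk)) from
      Finset.sum_congr rfl fun i _ => by ring]
    rw [Finset.sum_add_distrib, ← Finset.mul_sum, ← Finset.sum_mul, Finset.sum_sub_distrib]
  rw [e0, e1, e2, e3, hlt]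
  field_simp
  ring

/-- Contraction: if `w̃^k` is the output of the parallel splitting ALM step with input `ξ^k`
and `ξ^{k+1} = ξ^k − αℳ(ξ^k − ξ̃^k)` with `α ∈ (0,2)`, then for every `ξ* ∈ Ξ*`:
`‖ξ^{k+1} − ξ*‖²_ℋ ≤ ‖ξ^k − ξ*‖²_ℋ − α(2 − α)‖ξ^k − ξ̃^k‖²_𝒟`. -/
theorem stmt11 {p m : ℕ} {n : Fin p → ℕ} (hp : 1 ≤ p)
    (θ : (i : Fin p) → (Fin (n i) → ℝ) → ℝ) (hθ : ∀ i, ConvexOn ℝ Set.univ (θ i))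
    (X : (i : Fin p) → Set (Fin (n i) → ℝ))
    (hXconv : ∀ i, Convex ℝ (X i)) (hXclosed : ∀ i, IsClosed (X i))
    (hXne : ∀ i, (X i).Nonempty)
    (A : (i : Fin p) → Matrix (Fin m) (Fin (n i)) ℝ) (b : Fin m → ℝ)
    {β : ℝ} (hβ : 0 < β) {α : ℝ} (hα : α ∈ Set.Ioo (0 : ℝ) 2)
    (ξk ξk1 : (Fin p ⊕ Unit) × Fin m → ℝ)
    (wt : ((i : Fin p) → Fin (n i) → ℝ) × (Fin m → ℝ))
    (hstep : ALMStep β θ X A b ξk wt)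
    (hrel : ξk1 = ξk - α • (calM p m β).mulVec (ξk - Pmap A wt)) :
    ∀ ξs ∈ Pmap A '' VIsol θ X A b,
      nsq (calH p m β) (ξk1 - ξs) ≤
        nsq (calH p m β) (ξk - ξs) - α * (2 - α) * nsq (calD p m β) (ξk - Pmap A wt) := by
  obtain ⟨hα0, hα2⟩ := hα
  have hβ' : β ≠ 0 := ne_of_gt hβ
  rintro ξs ⟨ws, hws, rfl⟩
  set d := ξk - Pmap A wt with hd
  set a := ξk - Pmap A ws with ha
  set z := (calM p m β).mulVec d with hz
  -- ===== Part 1 : the key inequality  0 ≤ (Pw̃ − Pw*) ⬝ 𝒬 (ξk − Pw̃) =====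
  have hopt : ∀ i, 0 ≤ θ i (ws.1 i) - θ i (wt.1 i) +
      ((A i).mulVec (ws.1 i) - (A i).mulVec (wt.1 i)) ⬝ᵥ
        (β • ((A i).mulVec (wt.1 i) - uOf ξk i) - lamOf ξk) := fun i =>
    opt_first_order (θ i) (hθ i) (X i) (hXconv i) (A i) (lamOf ξk) (uOf ξk i) hβ
      (wt.1 i) (hstep.1 i).1 (fun y hy => (hstep.1 i).2 y hy) (ws.1 i) (hws.1 i)
  have hwtΩ : wt ∈ OmegaSet m X := fun i => (hstep.1 i).1
  have hVI := hws.2 wt hwtΩ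
  have hVIexp : dotW (wt - ws) (Fop A b ws)
      = (∑ i, ((A i).mulVec (ws.1 i) - (A i).mulVec (wt.1 i)) ⬝ᵥ ws.2)
        + (wt.2 - ws.2) ⬝ᵥ ((∑ i, (A i).mulVec (ws.1 i)) - b) := by
    rw [dotW]
    congr 1
    refine Finset.sum_congr rfl fun i _ => ?_
    have h1 : (wt - ws).1 i = wt.1 i - ws.1 i := rfl
    have h2 : (Fop A b ws).1 i = -((A i)ᵀ.mulVec ws.2) := rfl
    rw [h1, h2, dotProduct_neg, dot_transpose_mulVec, Matrix.mulVec_sub,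
      sub_dotProduct, sub_dotProduct]
    ring
  have hKEY0 : 0 ≤ (∑ i, ((A i).mulVec (ws.1 i) - (A i).mulVec (wt.1 i)) ⬝ᵥ
        ((β • ((A i).mulVec (wt.1 i) - uOf ξk i) - lamOf ξk) + ws.2))
      + (wt.2 - ws.2) ⬝ᵥ ((∑ i, (A i).mulVec (ws.1 i)) - b) := by
    have hsum : 0 ≤ (∑ i, (θ i (ws.1 i) - θ i (wt.1 i))) +
        ∑ i, ((A i).mulVec (ws.1 i) - (A i).mulVec (wt.1 i)) ⬝ᵥ
          (β • ((A i).mulVec (wt.1 i) - uOf ξk i) - lamOf ξk) := by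
      rw [← Finset.sum_add_distrib]
      exact Finset.sum_nonneg fun i _ => hopt i
    rw [hVIexp] at hVI
    simp only [thetaSum] at hVI
    have hsplit : ∀ i, ((A i).mulVec (ws.1 i) - (A i).mulVec (wt.1 i)) ⬝ᵥ
        ((β • ((A i).mulVec (wt.1 i) - uOf ξk i) - lamOf ξk) + ws.2)
        = ((A i).mulVec (ws.1 i) - (A i).mulVec (wt.1 i)) ⬝ᵥ
            (β • ((A i).mulVec (wt.1 i) - uOf ξk i) - lamOf ξk)
          + ((A i).mulVec (ws.1 i) - (A i).mulVec (wt.1 i)) ⬝ᵥ ws.2 :=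
      fun i => dotProduct_add _ _ _
    simp only [hsplit, Finset.sum_add_distrib, Finset.sum_sub_distrib] at *
    linarith
  -- component identification
  have hv1 : ∀ i, (fun j => (Pmap A wt - Pmap A ws) (Sum.inl i, j))
      = (A i).mulVec (wt.1 i) - (A i).mulVec (ws.1 i) := by
    intro i; funext j; simp [Pmap]
  have hv2 : (fun j => (Pmap A wt - Pmap A ws) (Sum.inr (), j)) = wt.2 - ws.2 := by
    funext j; simp [Pmap]
  have hw1 : ∀ i, (fun j => d (Sum.inl i, j)) = uOf ξk i - (A i).mulVec (wt.1 i) := by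
    intro i; funext j; simp [hd, Pmap, uOf]
  have hw2 : (fun j => d (Sum.inr (), j)) = lamOf ξk - wt.2 := by
    funext j; simp [hd, Pmap, lamOf]
  have hQd : (Pmap A wt - Pmap A ws) ⬝ᵥ (calQ p m β).mulVec d
      = (∑ i, (β * (((A i).mulVec (wt.1 i) - (A i).mulVec (ws.1 i)) ⬝ᵥ
              (uOf ξk i - (A i).mulVec (wt.1 i)))
            + ((A i).mulVec (wt.1 i) - (A i).mulVec (ws.1 i)) ⬝ᵥ (lamOf ξk - wt.2)))
        - (∑ i, (wt.2 - ws.2) ⬝ᵥ (uOf ξk i - (A i).mulVec (wt.1 i)))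
        + 1 / β * ((wt.2 - ws.2) ⬝ᵥ (lamOf ξk - wt.2)) := by
    rw [Q_bilin]
    simp only [hv1, hv2, hw1, hw2]
  have hlt : ∀ j, wt.2 j = lamOf ξk j - β * ((∑ i, uOf ξk i j) - b j) := by
    intro j
    have := congrFun hstep.2 j
    simpa [Finset.sum_apply] using this
  have hbridge : (∑ i, (β * (((A i).mulVec (wt.1 i) - (A i).mulVec (ws.1 i)) ⬝ᵥ
              (uOf ξk i - (A i).mulVec (wt.1 i)))
            + ((A i).mulVec (wt.1 i) - (A i).mulVec (ws.1 i)) ⬝ᵥ (lamOf ξk - wt.2)))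
        - (∑ i, (wt.2 - ws.2) ⬝ᵥ (uOf ξk i - (A i).mulVec (wt.1 i)))
        + 1 / β * ((wt.2 - ws.2) ⬝ᵥ (lamOf ξk - wt.2))
      = (∑ i, ((A i).mulVec (ws.1 i) - (A i).mulVec (wt.1 i)) ⬝ᵥ
            ((β • ((A i).mulVec (wt.1 i) - uOf ξk i) - lamOf ξk) + ws.2))
        + (wt.2 - ws.2) ⬝ᵥ ((∑ i, (A i).mulVec (ws.1 i)) - b) := by
    have T1 : (∑ i, (β * (((A i).mulVec (wt.1 i) - (A i).mulVec (ws.1 i)) ⬝ᵥ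
              (uOf ξk i - (A i).mulVec (wt.1 i)))
            + ((A i).mulVec (wt.1 i) - (A i).mulVec (ws.1 i)) ⬝ᵥ (lamOf ξk - wt.2)))
        = ∑ j, ∑ i, (β * (((A i).mulVec (wt.1 i) j - (A i).mulVec (ws.1 i) j) *
              (uOf ξk i j - (A i).mulVec (wt.1 i) j))
            + ((A i).mulVec (wt.1 i) j - (A i).mulVec (ws.1 i) j) *
              (lamOf ξk j - wt.2 j)) := by
      rw [Finset.sum_comm]
      refine Finset.sum_congr rfl fun i _ => ?_
      simp only [dotProduct, Pi.sub_apply, Finset.mul_sum, ← Finset.sum_add_distrib]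
    have T2 : (∑ i, (wt.2 - ws.2) ⬝ᵥ (uOf ξk i - (A i).mulVec (wt.1 i)))
        = ∑ j, ∑ i, (wt.2 j - ws.2 j) * (uOf ξk i j - (A i).mulVec (wt.1 i) j) := by
      rw [Finset.sum_comm]
      exact Finset.sum_congr rfl fun i _ => by simp only [dotProduct, Pi.sub_apply]
    have T4 : (∑ i, ((A i).mulVec (ws.1 i) - (A i).mulVec (wt.1 i)) ⬝ᵥ
            ((β • ((A i).mulVec (wt.1 i) - uOf ξk i) - lamOf ξk) + ws.2))
        = ∑ j, ∑ i, ((A i).mulVec (ws.1 i) j - (A i).mulVec (wt.1 i) j) *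
            ((β * ((A i).mulVec (wt.1 i) j - uOf ξk i j) - lamOf ξk j) + ws.2 j) := by
      rw [Finset.sum_comm]
      exact Finset.sum_congr rfl fun i _ => by
        simp only [dotProduct, Pi.sub_apply, Pi.add_apply, Pi.smul_apply, smul_eq_mul]
    rw [T1, T2, T4]
    simp only [dotProduct, Pi.sub_apply, Finset.sum_apply, Finset.mul_sum,
      ← Finset.sum_sub_distrib, ← Finset.sum_add_distrib]
    refine Finset.sum_congr rfl fun j _ => ?_
    simp only [Finset.sum_add_distrib, Finset.sum_sub_distrib]
    linear_combination bridge_j β (lamOf ξk j) (ws.2 j) (wt.2 j) (b j) hβ'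
      (fun i => (A i).mulVec (wt.1 i) j) (fun i => (A i).mulVec (ws.1 i) j)
      (fun i => uOf ξk i j) (hlt j)
  have hKEY : 0 ≤ (Pmap A wt - Pmap A ws) ⬝ᵥ (calQ p m β).mulVec d := by
    rw [hQd, hbridge]; exact hKEY0
  -- ===== Part 2 : matrix algebra =====
  have hHsymm : (calH p m β)ᵀ = calH p m β := by
    rw [calH, ← Matrix.kroneckerMap_transpose, Matrix.transpose_one, H0_symm]
  have hMT : (calM p m β)ᵀ = (M0 p β)ᵀ ⊗ₖ (1 : Matrix (Fin m) (Fin m) ℝ) := by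
    rw [calM, ← Matrix.kroneckerMap_transpose, Matrix.transpose_one]
  have hHM : calH p m β * calM p m β = calQ p m β := by
    rw [calH, calM, calQ, ← Matrix.mul_kronecker_mul, H0_mul_M0 p β hβ', Matrix.one_mul]
  have hE1 : (calH p m β).mulVec z = (calQ p m β).mulVec d := by
    rw [hz, Matrix.mulVec_mulVec, hHM]
  have hE2 : z ⬝ᵥ (calH p m β).mulVec z = nsq (calD p m β) d := by
    rw [hE1, hz, dotProduct_comm, dot_mulVec_comm, Matrix.mulVec_mulVec, hMT, calQ,
      ← Matrix.mul_kronecker_mul, M0T_mul_Q0 p β hβ', Matrix.one_mul]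
    rfl
  have hE4 : z ⬝ᵥ (calH p m β).mulVec a = a ⬝ᵥ (calQ p m β).mulVec d := by
    rw [dot_mulVec_comm, hHsymm, hE1]
  have hE5 : d ⬝ᵥ (calQ p m β).mulVec d = nsq (calD p m β) d := by
    have h1 : d ⬝ᵥ (calQ p m β).mulVec d = d ⬝ᵥ ((calQ p m β)ᵀ).mulVec d :=
      dot_mulVec_comm _ d d
    have hQT : calQ p m β + (calQ p m β)ᵀ = calD p m β + calD p m β := by
      rw [calQ, calD, ← Matrix.kroneckerMap_transpose, Matrix.transpose_one,
        ← Matrix.add_kronecker, Q0_add_Q0T, Matrix.add_kronecker]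
    have h2 : d ⬝ᵥ (calQ p m β + (calQ p m β)ᵀ).mulVec d
        = d ⬝ᵥ (calQ p m β).mulVec d + d ⬝ᵥ ((calQ p m β)ᵀ).mulVec d := by
      rw [Matrix.add_mulVec, dotProduct_add]
    have h3 : d ⬝ᵥ (calD p m β + calD p m β).mulVec d
        = nsq (calD p m β) d + nsq (calD p m β) d := by
      rw [Matrix.add_mulVec, dotProduct_add]; rfl
    rw [hQT] at h2
    rw [h3] at h2
    linarith
  have hξ : ξk1 - Pmap A ws = a - α • z := by
    rw [hrel, ha]
    abel
  have hexp : nsq (calH p m β) (ξk1 - Pmap A ws)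
      = nsq (calH p m β) a - 2 * α * (a ⬝ᵥ (calQ p m β).mulVec d)
        + α ^ 2 * nsq (calD p m β) d := by
    rw [hξ, nsq_sub_expand]
    have s1 : a ⬝ᵥ (calH p m β).mulVec (α • z) = α * (a ⬝ᵥ (calQ p m β).mulVec d) := by
      rw [Matrix.mulVec_smul, dotProduct_smul, smul_eq_mul, hE1]
    have s2 : (α • z) ⬝ᵥ (calH p m β).mulVec a = α * (a ⬝ᵥ (calQ p m β).mulVec d) := by
      rw [smul_dotProduct, smul_eq_mul, hE4]
    have s3 : nsq (calH p m β) (α • z) = α ^ 2 * nsq (calD p m β) d := by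
      rw [nsq, Matrix.mulVec_smul, dotProduct_smul, smul_dotProduct, smul_eq_mul,
        smul_eq_mul, ← hE2]
      ring
    rw [s1, s2, s3]
    ring
  have hge : nsq (calD p m β) d ≤ a ⬝ᵥ (calQ p m β).mulVec d := by
    have hsplit : a ⬝ᵥ (calQ p m β).mulVec d
        = (Pmap A wt - Pmap A ws) ⬝ᵥ (calQ p m β).mulVec d
          + d ⬝ᵥ (calQ p m β).mulVec d := by
      rw [← add_dotProduct]
      congr 1
      rw [ha, hd]
      abel
    rw [hsplit, hE5]
    linarith
  rw [hexp]
  nlinarith [mul_le_mul_of_nonneg_left hge (le_of_lt hα0)]
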